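/- arXiv:2406.04250 — 4 statements merged into one kernel-verified Lean document; each statement's English description precedes it below -/
import Mathlib

section
/- Multiplicative weights update regret bound: Let d, T ∈ ℕ with d ≥ 1, let η ∈ (0, 1/2], and let m⁽¹⁾,…,m⁽ᵀ⁾ ∈ [−1,1]^d be cost vectors. Define weights w⁽¹⁾ = (1,…,1) and w_i⁽ᵗ⁺¹⁾ = w_i⁽ᵗ⁾(1 − η m_i⁽ᵗ⁾), and probability vectors p⁽ᵗ⁾ = w⁽ᵗ⁾ / (∑_i w_i⁽ᵗ⁾). Then for every probability vector q on {1,…,d}, ∑_{t=1}^T m⁽ᵗ⁾·p⁽ᵗ⁾ ≤ ∑_{t=1}^T m⁽ᵗ⁾·q + ηT + (log d)/η. -/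
lemma mwu_log_key {y : ℝ} (hy1 : -(1/2) ≤ y) (hy2 : y ≤ 1/2) :
    -y - y^2 ≤ Real.log (1 - y) := by
  have h1 : (0:ℝ) < 1 - y := by linarith
  rcases le_or_gt y 0 with hy | hy
  · have := Real.one_sub_inv_le_log_of_pos h1
    have hinv : (1 - y)⁻¹ = 1/(1-y) := by rw [inv_eq_one_div]
    have : 1 - 1/(1-y) ≤ Real.log (1 - y) := by rw [← hinv]; exact this
    have hfrac : 1/(1-y) ≤ 1 + y + y^2 := by
      rw [div_le_iff₀ h1]; nlinarith
    linarith
  · set z := y + y^2 with hz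
    have hz0 : 0 ≤ z := by nlinarith
    have hq := Real.quadratic_le_exp_of_nonneg hz0
    have hpoly : (1:ℝ) ≤ (1 - y) * (1 + z + z^2/2) := by nlinarith
    have hle : Real.exp (-z) ≤ 1 - y := by
      rw [Real.exp_neg, inv_le_comm₀ (Real.exp_pos z) h1]
      have : (1:ℝ)/(1-y) ≤ 1 + z + z^2/2 := by
        rw [div_le_iff₀ h1]; nlinarith
      calc (1-y)⁻¹ = 1/(1-y) := by rw [inv_eq_one_div]
        _ ≤ 1 + z + z^2/2 := this
        _ ≤ Real.exp z := hq
    have := (Real.le_log_iff_exp_le h1).2 hle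
    have : -y - y^2 = -z := by ring
    linarith [(Real.le_log_iff_exp_le h1).2 hle]


/-- Multiplicative weights update (MWU) regret bound (Arora–Hazan–Kale, Theorem 2.3):
with weights `w⁽¹⁾ = 1`, `w_i⁽ᵗ⁺¹⁾ = w_i⁽ᵗ⁾ (1 − η m_i⁽ᵗ⁾)` and `p⁽ᵗ⁾ = w⁽ᵗ⁾/∑ w⁽ᵗ⁾`,
for every probability vector `q`:
`∑_t m⁽ᵗ⁾·p⁽ᵗ⁾ ≤ ∑_t m⁽ᵗ⁾·q + ηT + (log d)/η`. -/
theorem mwu_regret_bound (d T : ℕ) (hd : 1 ≤ d)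
    (η : ℝ) (hη : 0 < η ∧ η ≤ 1 / 2)
    (m : ℕ → Fin d → ℝ) (hm : ∀ t i, m t i ∈ Set.Icc (-1 : ℝ) 1)
    (w : ℕ → Fin d → ℝ)
    (hw0 : ∀ i, w 0 i = 1)
    (hwstep : ∀ t i, w (t + 1) i = w t i * (1 - η * m t i))
    (p : ℕ → Fin d → ℝ)
    (hp : ∀ t i, p t i = w t i / ∑ j, w t j)
    (q : Fin d → ℝ) (hq : ∀ i, 0 ≤ q i) (hq1 : ∑ i, q i = 1) :
    ∑ t ∈ Finset.range T, ∑ i, m t i * p t i ≤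
      (∑ t ∈ Finset.range T, ∑ i, m t i * q i) + η * T + Real.log d / η := by
  obtain ⟨hη0, hη2⟩ := hη
  haveI : Nonempty (Fin d) := ⟨⟨0, hd⟩⟩
  -- positivity of factors and weights
  have hfac : ∀ t i, (1:ℝ)/2 ≤ 1 - η * m t i := by
    intro t i
    obtain ⟨h1, h2⟩ := hm t i
    nlinarith
  have hfacpos : ∀ t i, (0:ℝ) < 1 - η * m t i := fun t i => lt_of_lt_of_le (by norm_num) (hfac t i)
  have hwpos : ∀ t i, 0 < w t i := by
    intro t
    induction t with
    | zero => intro i; rw [hw0]; norm_num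
    | succ t ih => intro i; rw [hwstep]; exact mul_pos (ih i) (hfacpos t i)
  set S : ℕ → ℝ := fun t => ∑ j, w t j with hS
  have hSpos : ∀ t, 0 < S t := fun t =>
    Finset.sum_pos (fun j _ => hwpos t j) Finset.univ_nonempty
  -- cost of the algorithm at time t
  set c : ℕ → ℝ := fun t => ∑ j, m t j * p t j with hc
  have hc_bounds : ∀ t, -1 ≤ c t ∧ c t ≤ 1 := by
    intro t
    have hpnn : ∀ j, 0 ≤ p t j := by
      intro j; rw [hp]; exact div_nonneg (hwpos t j).le (hSpos t).le
    have hpsum : ∑ j, p t j = 1 := by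
      simp only [hp]; rw [← Finset.sum_div]; exact div_self (hSpos t).ne'
    constructor
    · have : ∀ j ∈ Finset.univ, -p t j ≤ m t j * p t j := by
        intro j _
        have := (hm t j).1
        nlinarith [hpnn j]
      calc (-1:ℝ) = ∑ j, (-(p t j)) := by rw [Finset.sum_neg_distrib, hpsum]
        _ ≤ c t := Finset.sum_le_sum this
    · have : ∀ j ∈ Finset.univ, m t j * p t j ≤ p t j := by
        intro j _
        have := (hm t j).2
        nlinarith [hpnn j]
      calc c t ≤ ∑ j, p t j := Finset.sum_le_sum this
        _ = 1 := hpsum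
  -- potential recursion
  have hSrec : ∀ t, S (t+1) = S t * (1 - η * c t) := by
    intro t
    have h1 : S (t+1) = ∑ j, w t j * (1 - η * m t j) := by
      simp only [hS]; exact Finset.sum_congr rfl fun j _ => hwstep t j
    have h2 : c t * S t = ∑ j, m t j * w t j := by
      simp only [hc, hp, Finset.sum_mul]
      refine Finset.sum_congr rfl fun j _ => ?_
      rw [mul_assoc, div_mul_cancel₀ _ (hSpos t).ne']
    rw [h1]
    have : ∑ j, w t j * (1 - η * m t j) = S t - η * (c t * S t) := by
      rw [h2, Finset.mul_sum, ← Finset.sum_sub_distrib]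
      refine Finset.sum_congr rfl fun j _ => ?_
      ring
    rw [this]; ring
  -- upper bound on log S T
  have hup : Real.log (S T) ≤ Real.log (S 0) - η * ∑ t ∈ Finset.range T, c t := by
    induction T with
    | zero => simp
    | succ T ih =>
      rw [hSrec T, Real.log_mul (hSpos T).ne' ?_, Finset.sum_range_succ]
      · have hcb := hc_bounds T
        have hpos : 0 < 1 - η * c T := by nlinarith
        have := Real.log_le_sub_one_of_pos hpos
        have : Real.log (1 - η * c T) ≤ -(η * c T) := by linarith
        linarith
      · have hcb := hc_bounds T
        have : 0 < 1 - η * c T := by nlinarith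
        exact this.ne'
  have hS0 : Real.log (S 0) = Real.log d := by
    simp only [hS, hw0]
    simp
  -- lower bound via each coordinate i
  have hlow : ∀ i, -η * (∑ t ∈ Finset.range T, m t i) - η^2 * T ≤ Real.log (S T) := by
    intro i
    have hwlog : ∀ t : ℕ, -η * (∑ s ∈ Finset.range t, m s i) - η^2 * t ≤ Real.log (w t i) := by
      intro t
      induction t with
      | zero => simp [hw0]
      | succ t ih =>
        rw [hwstep, Real.log_mul (hwpos t i).ne' (hfacpos t i).ne', Finset.sum_range_succ]
        have hkey : -(η * m t i) - (η * m t i)^2 ≤ Real.log (1 - η * m t i) := by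
          apply mwu_log_key
          · obtain ⟨h1, h2⟩ := hm t i; nlinarith
          · obtain ⟨h1, h2⟩ := hm t i; nlinarith
        have hsq : (η * m t i)^2 ≤ η^2 := by
          obtain ⟨h1, h2⟩ := hm t i
          have hm2 : m t i ^ 2 ≤ 1 := by nlinarith
          nlinarith [sq_nonneg η]
        push_cast
        nlinarith [hkey, hsq, ih]
    have hwle : w T i ≤ S T :=
      Finset.single_le_sum (fun j _ => (hwpos T j).le) (Finset.mem_univ i)
    calc -η * (∑ t ∈ Finset.range T, m t i) - η^2 * T ≤ Real.log (w T i) := hwlog T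
      _ ≤ Real.log (S T) := Real.log_le_log (hwpos T i) hwle
  -- per-coordinate regret bound
  have hper : ∀ i, ∑ t ∈ Finset.range T, c t ≤
      (∑ t ∈ Finset.range T, m t i) + η * T + Real.log d / η := by
    intro i
    have h1 := hlow i
    have h2 := hup
    rw [hS0] at h2
    have h3 : η * ∑ t ∈ Finset.range T, c t ≤
        η * (∑ t ∈ Finset.range T, m t i) + η^2 * T + Real.log d := by linarith
    rw [← mul_le_mul_iff_right₀ hη0]
    have hexp : η * ((∑ t ∈ Finset.range T, m t i) + η * T + Real.log d / η)
        = η * (∑ t ∈ Finset.range T, m t i) + η^2 * T + Real.log d := by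
      field_simp
    rw [hexp]; exact h3
  -- average over q
  have hLHS : ∑ t ∈ Finset.range T, ∑ i, m t i * p t i = ∑ t ∈ Finset.range T, c t := rfl
  rw [hLHS]
  have key : ∑ t ∈ Finset.range T, c t =
      ∑ i, q i * (∑ t ∈ Finset.range T, c t) := by
    rw [← Finset.sum_mul, hq1, one_mul]
  rw [key]
  have hbound : ∑ i, q i * (∑ t ∈ Finset.range T, c t) ≤
      ∑ i, q i * ((∑ t ∈ Finset.range T, m t i) + η * T + Real.log d / η) := by
    refine Finset.sum_le_sum fun i _ => ?_
    exact mul_le_mul_of_nonneg_left (hper i) (hq i)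
  refine hbound.trans ?_
  have : ∑ i, q i * ((∑ t ∈ Finset.range T, m t i) + η * T + Real.log d / η)
      = (∑ i, q i * ∑ t ∈ Finset.range T, m t i) + η * T + Real.log d / η := by
    simp only [mul_add, Finset.sum_add_distrib, ← Finset.sum_mul, hq1, one_mul]
  rw [this]
  have hswap : ∑ i, q i * ∑ t ∈ Finset.range T, m t i
      = ∑ t ∈ Finset.range T, ∑ i, m t i * q i := by
    calc ∑ i, q i * ∑ t ∈ Finset.range T, m t i
        = ∑ i, ∑ t ∈ Finset.range T, q i * m t i := by
          exact Finset.sum_congr rfl fun i _ => Finset.mul_sum _ _ _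
      _ = ∑ t ∈ Finset.range T, ∑ i, q i * m t i := Finset.sum_comm
      _ = ∑ t ∈ Finset.range T, ∑ i, m t i * q i := by
          exact Finset.sum_congr rfl fun t _ =>
            Finset.sum_congr rfl fun i _ => mul_comm _ _
  rw [hswap]
end

section
/- From regret to mistake bounds: Suppose an online learner for a class F ⊆ ℝ^X, with losses ℓ_t(·) = |(·) − b_t| where some f* ∈ F satisfies |b_t − f*(x_t)| ≤ ε/3 for all t, has regret bounded as R_T ≤ h₁(ε, T) + h₂(ε)·T with h₁(ε,·) ∈ o(T) and h₂(ε) < 2ε/3. Let T* be the smallest natural number such that T' > T* implies T' > h₁(ε, T')/((2ε/3) − h₂(ε)). Then the mistake-driven variant of the learner (updating only on rounds with an ε-mistake) makes at most T* many ε-mistakes, regardless of the total number of rounds. -/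
/-- Lemma 2.4 (from regret to mistake bounds). Consider the mistake-driven online learner:
we record the subsequence of rounds in which it makes an ε-mistake (these are exactly the
rounds in which it updates), with challenges `x t`, revealed values `b t`, and hypotheses
`f t ∈ F`.  In the realizable setting (`|b t − f*(x t)| ≤ ε/3` for some `f* ∈ F`), if every
recorded round is an ε-mistake (`|f t (x t) − b t| > ε`) and the regret against the best
comparator in `F` satisfies `R_{T'} ≤ h₁(ε,T') + h₂(ε)·T'` for every prefix, where
`h₂(ε) < 2ε/3`, and `T*` is the least natural number such that every `T' > T*` satisfies
`T' > h₁(ε,T') / ((2ε/3) − h₂(ε))`, then the total number `T` of ε-mistakes is at most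
`T*`, independently of the overall number of rounds. -/
theorem regret_to_mistake_bound {X : Type*} (F : Set (X → ℝ))
    (ε : ℝ) (hε : ε ∈ Set.Ioo (0 : ℝ) 1)
    (h₁ : ℝ → ℕ → ℝ) (h₂ : ℝ → ℝ)
    (hh₁ : ∀ e T', 0 ≤ h₁ e T') (hh₂ : 0 ≤ h₂ ε) (hh₂ε : h₂ ε < 2 * ε / 3)
    (Tstar : ℕ)
    (hTstar : IsLeast
      {N : ℕ | ∀ T' : ℕ, T' > N → (T' : ℝ) > h₁ ε T' / (2 * ε / 3 - h₂ ε)} Tstar)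
    (T : ℕ) (x : ℕ → X) (b : ℕ → ℝ)
    (f : ℕ → X → ℝ) (hf : ∀ t, f t ∈ F)
    (fstar : X → ℝ) (hfstar : fstar ∈ F)
    (hrealizable : ∀ t, |b t - fstar (x t)| ≤ ε / 3)
    (hmistake : ∀ t < T, ε < |f t (x t) - b t|)
    (hregret : ∀ T' ≤ T, ∀ g ∈ F,
      (∑ t ∈ Finset.range T', |f t (x t) - b t|)
        - ∑ t ∈ Finset.range T', |g (x t) - b t| ≤ h₁ ε T' + h₂ ε * T') :
    T ≤ Tstar := by
  by_contra hlt
  push_neg at hlt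
  have hδ : (0 : ℝ) < 2 * ε / 3 - h₂ ε := by linarith
  have hR := hregret T le_rfl fstar hfstar
  have h1 : ∀ t ∈ Finset.range T, (2 * ε / 3 : ℝ) ≤ |f t (x t) - b t| - |fstar (x t) - b t| := by
    intro t ht
    have h2 := hmistake t (Finset.mem_range.mp ht)
    have h3 := hrealizable t
    have : |fstar (x t) - b t| = |b t - fstar (x t)| := abs_sub_comm _ _
    linarith [this ▸ h3]
  have hsum : (2 * ε / 3) * T ≤
      (∑ t ∈ Finset.range T, |f t (x t) - b t|) - ∑ t ∈ Finset.range T, |fstar (x t) - b t| := by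
    rw [← Finset.sum_sub_distrib]
    calc (2 * ε / 3) * T = ∑ _t ∈ Finset.range T, (2 * ε / 3 : ℝ) := by
          simp [mul_comm]
      _ ≤ _ := Finset.sum_le_sum h1
  have hkey : (T : ℝ) ≤ h₁ ε T / (2 * ε / 3 - h₂ ε) := by
    rw [le_div_iff₀ hδ]
    nlinarith
  have := hTstar.1 T hlt
  linarith
end

section
/- The Pauli twirl of a channel is a Pauli channel with Bell-measurement error rates: For any quantum channel N on ℂ^d, the Pauli-twirled channel N^W(ρ) = (1/d²)∑_{z,x} W^{z,x}† N(W^{z,x} ρ W^{z,x}†) W^{z,x} has Choi matrix C(N^W) = ∑_{z,x} Tr[Φ^{z,x} C(N)] Φ^{z,x}; in particular N^W is a Pauli channel with error rates p(z,x) = (1/d)Tr[Φ^{z,x} C(N)] forming a probability distribution. -/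
/-!
Conjugating a Kraus operator by `W` conjugates the Choi matrix by `Wᵀ ⊗ W†`: this is the
transpose trick `(1 ⊗ A)|Γ⟩ = (Aᵀ ⊗ 1)|Γ⟩`. Entrywise, `(Wᵀ ⊗ W†) X (Wᵀ ⊗ W†)†` only shifts the
indices of `X` by `(x, x)` and multiplies by a character of `z`, so summing over `z` keeps only
the entries `(p, q)` with `p₁ - p₂ = q₁ - q₂`. Since `Tr[Φ^{z,x} X]` is a Fourier transform in
`z`, the same entries survive in `∑ Tr[Φ X] Φ`, with the same values: the twirl is the Bell
pinching. The error rates are nonnegative because each `Φ` has rank one and `C(N)` is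
positive semidefinite. They sum to `Tr[C(N)] / d = 1` because `∑ Φ = 1`.
-/

open Matrix Kronecker

/-- The Heisenberg–Weyl operator `W^{z,x} = Z(z)X(x)` on `ℂ^d`. -/
noncomputable def HW (d : ℕ) [NeZero d] (z x : ZMod d) : Matrix (ZMod d) (ZMod d) ℂ :=
  Matrix.of fun j k =>
    Complex.exp (2 * Real.pi * Complex.I * (j.val * z.val) / d) * (if j = k + x then 1 else 0)

/-- The unnormalized maximally entangled operator `|Γ⟩⟨Γ|`, `|Γ⟩ = ∑_k |k,k⟩`. -/
noncomputable def gammaMat (d : ℕ) [NeZero d] :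
    Matrix (ZMod d × ZMod d) (ZMod d × ZMod d) ℂ :=
  Matrix.of fun p q => (if p.1 = p.2 then 1 else 0) * (if q.1 = q.2 then 1 else 0)

/-- The Choi matrix `C(N) = (id ⊗ N)(|Γ⟩⟨Γ|)` of the channel with Kraus operators `K l`. -/
noncomputable def choiOfKraus (d r : ℕ) [NeZero d]
    (K : Fin r → Matrix (ZMod d) (ZMod d) ℂ) :
    Matrix (ZMod d × ZMod d) (ZMod d × ZMod d) ℂ :=
  ∑ l, ((1 : Matrix (ZMod d) (ZMod d) ℂ) ⊗ₖ K l) * gammaMat d *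
    ((1 : Matrix (ZMod d) (ZMod d) ℂ) ⊗ₖ K l)ᴴ

/-- The qudit Bell projector `Φ^{z,x}`. -/
noncomputable def quditBellProj (d : ℕ) [NeZero d] (z x : ZMod d) :
    Matrix (ZMod d × ZMod d) (ZMod d × ZMod d) ℂ :=
  Matrix.of fun p q =>
    (d : ℂ)⁻¹ * HW d z x p.2 p.1 * starRingEnd ℂ (HW d z x q.2 q.1)

open Finset ZMod ComplexOrder

lemma Matrix.PosSemidef.trace_vecMulVec_star_mul_nonneg {n R : Type*} [Fintype n] [CommRing R]
    [PartialOrder R] [StarRing R] {X : Matrix n n R} (hX : X.PosSemidef) (w : n → R) :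
    0 ≤ (vecMulVec w (star w) * X).trace := by
  rw [vecMulVec_mul, trace_vecMulVec, dotProduct_comm, ← dotProduct_mulVec]
  exact hX.dotProduct_mulVec_nonneg w

section

variable {d r : ℕ} [NeZero d]

lemma HW_apply (z x j k : ZMod d) :
    HW d z x j k = stdAddChar (j * z) * if j = k + x then 1 else 0 := by
  have hjz : j * z = ((j.val * z.val : ℕ) : ZMod d) := by simp
  rw [HW, of_apply, hjz, stdAddChar_apply, toCircle_natCast]
  push_cast
  rfl

lemma sum_stdAddChar_mul (c : ZMod d) :
    ∑ z : ZMod d, stdAddChar (z * c) = if c = 0 then (d : ℂ) else 0 := by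
  rw [AddChar.sum_mulShift c (isPrimitive_stdAddChar d), ZMod.card]
  split_ifs <;> simp

lemma conj_stdAddChar (a : ZMod d) : starRingEnd ℂ (stdAddChar a) = stdAddChar (-a) :=
  (AddChar.map_neg_eq_conj _ a).symm

lemma gammaMat_eq_vecMulVec :
    gammaMat d = vecMulVec (fun p => if p.1 = p.2 then 1 else 0)
      (star fun p => if p.1 = p.2 then 1 else 0) := by
  ext p q
  simp [gammaMat, vecMulVec_apply, apply_ite (star : ℂ → ℂ)]

lemma posSemidef_gammaMat : (gammaMat d).PosSemidef := by
  rw [gammaMat_eq_vecMulVec]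
  exact posSemidef_vecMulVec_self_star _

lemma one_kronecker_mul_gammaMat (A : Matrix (ZMod d) (ZMod d) ℂ) :
    (1 ⊗ₖ A) * gammaMat d = (Aᵀ ⊗ₖ 1) * gammaMat d := by
  ext p q
  simp [mul_apply, gammaMat, one_apply, Fintype.sum_prod_type]

lemma trace_one_kronecker_mul_gammaMat (M : Matrix (ZMod d) (ZMod d) ℂ) :
    ((1 ⊗ₖ M) * gammaMat d).trace = M.trace := by
  simp [trace, mul_apply, gammaMat, one_apply, Fintype.sum_prod_type]

lemma one_kronecker_conj_mul_gammaMat (A K : Matrix (ZMod d) (ZMod d) ℂ) :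
    (1 ⊗ₖ (Aᴴ * K * A)) * gammaMat d = (Aᵀ ⊗ₖ Aᴴ) * (1 ⊗ₖ K) * gammaMat d := by
  calc (1 ⊗ₖ (Aᴴ * K * A)) * gammaMat d
      = (1 ⊗ₖ Aᴴ) * (1 ⊗ₖ K) * ((1 ⊗ₖ A) * gammaMat d) := by
        rw [← Matrix.mul_assoc, ← mul_kronecker_mul, ← mul_kronecker_mul, one_mul, one_mul]
    _ = (1 ⊗ₖ Aᴴ) * (1 ⊗ₖ K) * ((Aᵀ ⊗ₖ 1) * gammaMat d) := by
        rw [one_kronecker_mul_gammaMat]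
    _ = (Aᵀ ⊗ₖ Aᴴ) * (1 ⊗ₖ K) * gammaMat d := by
        simp only [← Matrix.mul_assoc, ← mul_kronecker_mul, mul_one, one_mul]

lemma one_kronecker_conj_mul_gammaMat_mul_conjTranspose (A K : Matrix (ZMod d) (ZMod d) ℂ) :
    (1 ⊗ₖ (Aᴴ * K * A)) * gammaMat d * (1 ⊗ₖ (Aᴴ * K * A))ᴴ
      = (Aᵀ ⊗ₖ Aᴴ) * ((1 ⊗ₖ K) * gammaMat d * (1 ⊗ₖ K)ᴴ) * (Aᵀ ⊗ₖ Aᴴ)ᴴ := by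
  have hΓ : (gammaMat d)ᴴ = gammaMat d := posSemidef_gammaMat.isHermitian
  have h := one_kronecker_conj_mul_gammaMat A K
  generalize Aᴴ * K * A = M at h ⊢
  generalize Aᵀ ⊗ₖ Aᴴ = V at h ⊢
  calc (1 ⊗ₖ M) * gammaMat d * (1 ⊗ₖ M)ᴴ
      = (1 ⊗ₖ M) * ((1 ⊗ₖ M) * gammaMat d)ᴴ := by
        rw [conjTranspose_mul, hΓ, Matrix.mul_assoc]
    _ = (1 ⊗ₖ M) * gammaMat d * (1 ⊗ₖ K)ᴴ * Vᴴ := by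
        conv_lhs => rw [h]
        simp only [conjTranspose_mul, hΓ, Matrix.mul_assoc]
    _ = V * ((1 ⊗ₖ K) * gammaMat d * (1 ⊗ₖ K)ᴴ) * Vᴴ := by
        rw [h]
        simp only [Matrix.mul_assoc]

lemma posSemidef_choiOfKraus (K : Fin r → Matrix (ZMod d) (ZMod d) ℂ) :
    (choiOfKraus d r K).PosSemidef :=
  posSemidef_sum _ fun _ _ => posSemidef_gammaMat.mul_mul_conjTranspose_same _

lemma trace_choiOfKraus (K : Fin r → Matrix (ZMod d) (ZMod d) ℂ)
    (hK : ∑ l, (K l)ᴴ * K l = 1) : (choiOfKraus d r K).trace = d := by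
  calc (choiOfKraus d r K).trace = ∑ l, ((1 ⊗ₖ ((K l)ᴴ * K l)) * gammaMat d).trace := by
        rw [choiOfKraus, trace_sum]
        refine sum_congr rfl fun _ _ => ?_
        rw [trace_mul_cycle, conjTranspose_kronecker, conjTranspose_one, ← mul_kronecker_mul,
          one_mul]
    _ = d := by
        simp_rw [trace_one_kronecker_mul_gammaMat, ← trace_sum, hK, trace_one, ZMod.card]

lemma transpose_kronecker_conjTranspose_HW_apply (z x : ZMod d) (p s : ZMod d × ZMod d) :
    ((HW d z x)ᵀ ⊗ₖ (HW d z x)ᴴ) p s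
      = if s = p + (x, x) then stdAddChar ((p.1 - p.2) * z) else 0 := by
  obtain ⟨a, b⟩ := p
  obtain ⟨i, j⟩ := s
  simp only [kroneckerMap_apply, transpose_apply, conjTranspose_apply, HW_apply, star_mul',
    Complex.star_def, conj_stdAddChar, Prod.mk_add_mk, Prod.mk.injEq]
  by_cases h : i = a + x ∧ j = b + x
  · obtain ⟨rfl, rfl⟩ := h
    simp only [if_true, and_self, map_one, mul_one, ← AddChar.map_add_eq_mul]
    ring_nf
  · by_cases hi : i = a + x <;> simp_all

lemma transpose_kronecker_conjTranspose_HW_conj_apply (z x : ZMod d)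
    (X : Matrix (ZMod d × ZMod d) (ZMod d × ZMod d) ℂ) (p q : ZMod d × ZMod d) :
    ((HW d z x)ᵀ ⊗ₖ (HW d z x)ᴴ * X * ((HW d z x)ᵀ ⊗ₖ (HW d z x)ᴴ)ᴴ) p q
      = stdAddChar (z * (p.1 - p.2 - (q.1 - q.2))) * X (p + (x, x)) (q + (x, x)) := by
  simp only [mul_apply, conjTranspose_apply, transpose_kronecker_conjTranspose_HW_apply, ite_mul,
    zero_mul, apply_ite star, star_zero, Complex.star_def, conj_stdAddChar, mul_ite, mul_zero,
    sum_ite_eq', mem_univ, if_true]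
  rw [mul_right_comm, ← AddChar.map_add_eq_mul]
  ring_nf

end

/-- The Pauli twirl acting on Choi matrices (Lemma D.1); `Wᵀ ⊗ W† = (conj W ⊗ W)†`. -/
noncomputable def choiTwirl (d : ℕ) [NeZero d]
    (X : Matrix (ZMod d × ZMod d) (ZMod d × ZMod d) ℂ) :
    Matrix (ZMod d × ZMod d) (ZMod d × ZMod d) ℂ :=
  ((d : ℂ) ^ 2)⁻¹ • ∑ z : ZMod d, ∑ x : ZMod d,
    (HW d z x)ᵀ ⊗ₖ (HW d z x)ᴴ * X * ((HW d z x)ᵀ ⊗ₖ (HW d z x)ᴴ)ᴴ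

section

variable {d r : ℕ} [NeZero d]

lemma choiTwirl_apply (X : Matrix (ZMod d × ZMod d) (ZMod d × ZMod d) ℂ)
    (p q : ZMod d × ZMod d) :
    choiTwirl d X p q = if p.1 - p.2 = q.1 - q.2
      then (d : ℂ)⁻¹ * ∑ x : ZMod d, X (p + (x, x)) (q + (x, x)) else 0 := by
  have hd : (d : ℂ) ≠ 0 := NeZero.ne _
  simp only [choiTwirl, Matrix.smul_apply, Matrix.sum_apply,
    transpose_kronecker_conjTranspose_HW_conj_apply, smul_eq_mul]
  rw [sum_comm]
  simp only [← sum_mul, sum_stdAddChar_mul, sub_eq_zero, ite_mul, zero_mul]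
  split_ifs
  · rw [← mul_sum]
    field_simp
  · simp

lemma twirled_choi_eq_choiTwirl (K : Fin r → Matrix (ZMod d) (ZMod d) ℂ) :
    ((d : ℂ) ^ 2)⁻¹ • ∑ z : ZMod d, ∑ x : ZMod d, ∑ l,
        ((1 : Matrix (ZMod d) (ZMod d) ℂ) ⊗ₖ ((HW d z x)ᴴ * K l * HW d z x)) * gammaMat d *
          ((1 : Matrix (ZMod d) (ZMod d) ℂ) ⊗ₖ ((HW d z x)ᴴ * K l * HW d z x))ᴴ
      = choiTwirl d (choiOfKraus d r K) := by
  simp_rw [one_kronecker_conj_mul_gammaMat_mul_conjTranspose, ← sum_mul, ← mul_sum]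
  rfl

lemma quditBellProj_apply (z x : ZMod d) (p q : ZMod d × ZMod d) :
    quditBellProj d z x p q = (d : ℂ)⁻¹ * (if p.2 = p.1 + x then stdAddChar (p.2 * z) else 0) *
      (if q.2 = q.1 + x then stdAddChar (-(q.2 * z)) else 0) := by
  simp only [quditBellProj, of_apply, HW_apply, mul_ite, mul_one, mul_zero,
    apply_ite (starRingEnd ℂ), map_zero, conj_stdAddChar]

lemma quditBellProj_eq_smul_vecMulVec (z x : ZMod d) :
    quditBellProj d z x = (d : ℂ)⁻¹ • vecMulVec (fun p => HW d z x p.2 p.1)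
      (star fun p => HW d z x p.2 p.1) := by
  ext p q
  simp [quditBellProj, vecMulVec_apply, mul_assoc]

lemma trace_quditBellProj_mul_nonneg (z x : ZMod d)
    {X : Matrix (ZMod d × ZMod d) (ZMod d × ZMod d) ℂ} (hX : X.PosSemidef) :
    0 ≤ (quditBellProj d z x * X).trace := by
  rw [quditBellProj_eq_smul_vecMulVec, smul_mul, trace_smul, smul_eq_mul]
  exact mul_nonneg (by simp) (hX.trace_vecMulVec_star_mul_nonneg _)

lemma sum_quditBellProj : ∑ z : ZMod d, ∑ x : ZMod d, quditBellProj d z x = 1 := by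
  ext p q
  have hx : ∀ a b x : ZMod d, b = a + x ↔ x = b - a := fun a b x => by
    constructor <;> intro h <;> rw [h] <;> ring
  simp only [Matrix.sum_apply, quditBellProj_apply, hx, ite_mul, mul_ite, mul_zero, zero_mul,
    sum_ite_eq', mem_univ, if_true, one_apply]
  by_cases h : q.2 - q.1 = p.2 - p.1
  · have hpq : p = q ↔ p.2 = q.2 :=
      ⟨fun h' => h' ▸ rfl, fun h' => Prod.ext (by linear_combination h' + h) h'⟩
    simp only [h, if_true, mul_assoc, ← AddChar.map_add_eq_mul, ← mul_sum, hpq,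
      show ∀ z, p.2 * z + -(q.2 * z) = z * (p.2 - q.2) from fun z => by ring,
      sum_stdAddChar_mul, sub_eq_zero]
    split_ifs
    · exact inv_mul_cancel₀ (NeZero.ne _)
    · exact mul_zero _
  · have hpq : p ≠ q := fun h' => h (h' ▸ rfl)
    simp [h, hpq]

lemma trace_quditBellProj_mul (z x : ZMod d)
    (X : Matrix (ZMod d × ZMod d) (ZMod d × ZMod d) ℂ) :
    (quditBellProj d z x * X).trace
      = (d : ℂ)⁻¹ * ∑ r : ZMod d, ∑ s : ZMod d,
          stdAddChar (z * (r - s)) * X (s, s + x) (r, r + x) := by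
  simp only [trace, diag_apply, mul_apply, quditBellProj_apply, Fintype.sum_prod_type, ite_mul,
    mul_ite, zero_mul, mul_zero, sum_ite_eq', mem_univ, if_true, mul_sum]
  refine sum_congr rfl fun r _ => ?_
  rw [sum_comm]
  simp only [sum_ite_eq', mem_univ, if_true]
  refine sum_congr rfl fun s _ => ?_
  rw [show z * (r - s) = (r + x) * z + -((s + x) * z) by ring, AddChar.map_add_eq_mul]
  ring

lemma sum_trace_quditBellProj_mul_mul_stdAddChar (x a : ZMod d)
    (X : Matrix (ZMod d × ZMod d) (ZMod d × ZMod d) ℂ) :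
    ∑ z : ZMod d, (quditBellProj d z x * X).trace * stdAddChar (z * a)
      = ∑ s : ZMod d, X (s, s + x) (s - a, s - a + x) := by
  calc _ = (d : ℂ)⁻¹ * ∑ r : ZMod d, ∑ s : ZMod d,
          (∑ z : ZMod d, stdAddChar (z * (r - (s - a)))) * X (s, s + x) (r, r + x) := by
        simp_rw [trace_quditBellProj_mul, mul_sum, sum_mul]
        rw [sum_comm]
        refine sum_congr rfl fun r _ => ?_
        rw [sum_comm]
        refine sum_congr rfl fun s _ => ?_
        rw [mul_sum]
        refine sum_congr rfl fun z _ => ?_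
        rw [show z * (r - (s - a)) = z * (r - s) + z * a by ring, AddChar.map_add_eq_mul]
        ring
    _ = _ := by
        rw [sum_comm]
        simp only [sum_stdAddChar_mul, sub_eq_zero, ite_mul, zero_mul, sum_ite_eq', mem_univ,
          if_true]
        rw [← mul_sum, inv_mul_cancel_left₀ (NeZero.ne (d : ℂ))]

lemma sum_trace_mul_smul_quditBellProj_apply
    (X : Matrix (ZMod d × ZMod d) (ZMod d × ZMod d) ℂ) (p q : ZMod d × ZMod d) :
    (∑ z : ZMod d, ∑ x : ZMod d, (quditBellProj d z x * X).trace • quditBellProj d z x) p q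
      = if p.1 - p.2 = q.1 - q.2
          then (d : ℂ)⁻¹ * ∑ x : ZMod d, X (p + (x, x)) (q + (x, x)) else 0 := by
  have hpx : ∀ x, p.2 = p.1 + x ↔ x = p.2 - p.1 := fun x => by
    constructor <;> intro h <;> rw [h] <;> ring
  split_ifs with h
  · have hqx : ∀ x, q.2 = q.1 + x ↔ x = p.2 - p.1 := fun x => by
      constructor <;> intro h' <;> linear_combination h - h'
    have hq₁ : q.1 = p.1 + (q.2 - p.2) := by linear_combination -h
    simp only [Matrix.sum_apply, Matrix.smul_apply, smul_eq_mul, quditBellProj_apply, hpx, hqx,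
      ite_mul, mul_ite, mul_zero, zero_mul, sum_ite_eq', mem_univ, if_true]
    simp_rw [mul_assoc, ← AddChar.map_add_eq_mul, mul_left_comm _ (d : ℂ)⁻¹, ← mul_sum,
      show ∀ z, p.2 * z + -(q.2 * z) = z * (p.2 - q.2) from fun z => by ring,
      sum_trace_quditBellProj_mul_mul_stdAddChar]
    congr 1
    refine (Fintype.sum_equiv (Equiv.addLeft p.1) _ _ fun t => ?_).symm
    simp only [Equiv.coe_addLeft]
    congr 1 <;> ext <;> simp only [Prod.fst_add, Prod.snd_add, hq₁] <;> ring
  · have hpq : ∀ x, ¬ (p.2 = p.1 + x ∧ q.2 = q.1 + x) := fun x ⟨hp, hq⟩ =>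
      h (by linear_combination hq - hp)
    rw [Matrix.sum_apply]
    refine sum_eq_zero fun z _ => ?_
    rw [Matrix.sum_apply]
    refine sum_eq_zero fun x _ => ?_
    simp only [Matrix.smul_apply, quditBellProj_apply]
    by_cases hp : p.2 = p.1 + x <;> simp_all

lemma choiTwirl_eq_sum_trace_mul_smul_quditBellProj
    (X : Matrix (ZMod d × ZMod d) (ZMod d × ZMod d) ℂ) :
    choiTwirl d X = ∑ z : ZMod d, ∑ x : ZMod d,
      (quditBellProj d z x * X).trace • quditBellProj d z x := by
  ext p q
  rw [choiTwirl_apply, sum_trace_mul_smul_quditBellProj_apply]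

end

theorem pauli_twirl_is_pauli_channel_general (d r : ℕ) [NeZero d]
    (K : Fin r → Matrix (ZMod d) (ZMod d) ℂ)
    (hK : (∑ l, (K l)ᴴ * K l) = 1)
    (p : ZMod d → ZMod d → ℂ)
    (hp : ∀ z x, p z x = (d : ℂ)⁻¹ * (quditBellProj d z x * choiOfKraus d r K).trace) :
    (((d : ℂ) ^ 2)⁻¹ • ∑ z : ZMod d, ∑ x : ZMod d, ∑ l,
        ((1 : Matrix (ZMod d) (ZMod d) ℂ) ⊗ₖ ((HW d z x)ᴴ * K l * HW d z x)) * gammaMat d *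
          ((1 : Matrix (ZMod d) (ZMod d) ℂ) ⊗ₖ ((HW d z x)ᴴ * K l * HW d z x))ᴴ)
      = (∑ z : ZMod d, ∑ x : ZMod d,
          ((quditBellProj d z x * choiOfKraus d r K).trace) • quditBellProj d z x) ∧
    (∀ z x, (p z x).im = 0 ∧ 0 ≤ (p z x).re) ∧
    (∑ z : ZMod d, ∑ x : ZMod d, p z x) = 1 := by
  refine ⟨?_, fun z x => ?_, ?_⟩
  · rw [twirled_choi_eq_choiTwirl, choiTwirl_eq_sum_trace_mul_smul_quditBellProj]
  · have hnonneg : 0 ≤ p z x := hp z x ▸ mul_nonneg (by simp)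
      (trace_quditBellProj_mul_nonneg z x (posSemidef_choiOfKraus K))
    obtain ⟨hre, him⟩ := Complex.nonneg_iff.mp hnonneg
    exact ⟨him.symm, hre⟩
  · simp_rw [hp, ← mul_sum, ← trace_sum, ← Matrix.sum_mul, sum_quditBellProj, Matrix.one_mul,
      trace_choiOfKraus K hK]
    exact inv_mul_cancel₀ (NeZero.ne _)

/-- The Pauli twirl of a channel is a Pauli channel with Bell-measurement error rates: for a
channel `N` with Kraus operators `K l` (so `∑ K†K = 1`), the twirled channel
`N^W(ρ) = (1/d²) ∑_{z,x} W† N(W ρ W†) W` — with Kraus operators `(1/d) W† K_l W` — has Choi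
matrix `C(N^W) = ∑_{z,x} Tr[Φ^{z,x} C(N)] Φ^{z,x}`; in particular, the error rates
`p(z,x) = (1/d) Tr[Φ^{z,x} C(N)]` are real, nonnegative, and sum to `1`. -/
theorem pauli_twirl_is_pauli_channel (d r : ℕ) [NeZero d] (hd : 2 ≤ d)
    (K : Fin r → Matrix (ZMod d) (ZMod d) ℂ)
    (hK : (∑ l, (K l)ᴴ * K l) = 1)
    (p : ZMod d → ZMod d → ℂ)
    (hp : ∀ z x, p z x = (d : ℂ)⁻¹ * (quditBellProj d z x * choiOfKraus d r K).trace) :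
    (((d : ℂ) ^ 2)⁻¹ • ∑ z : ZMod d, ∑ x : ZMod d, ∑ l,
        ((1 : Matrix (ZMod d) (ZMod d) ℂ) ⊗ₖ ((HW d z x)ᴴ * K l * HW d z x)) * gammaMat d *
          ((1 : Matrix (ZMod d) (ZMod d) ℂ) ⊗ₖ ((HW d z x)ᴴ * K l * HW d z x))ᴴ)
      = (∑ z : ZMod d, ∑ x : ZMod d,
          ((quditBellProj d z x * choiOfKraus d r K).trace) • quditBellProj d z x) ∧
    (∀ z x, (p z x).im = 0 ∧ 0 ≤ (p z x).re) ∧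
    (∑ z : ZMod d, ∑ x : ZMod d, p z x) = 1 :=
  pauli_twirl_is_pauli_channel_general d r K hK p hp
end

section
/- Dual diamond norm is multiplicative on tensor products: For Hermitian operators K on H_A and L on H_B, the Hölder dual of the strategy 1-norm satisfies ‖K ⊗ L‖*_{◇1} = ‖K‖₁ · ‖L‖_∞, where ‖K⊗L‖*_{◇1} = inf{Tr[Y] : Y ≥ 0 on H_A, −Y⊗I_B ≤ K⊗L ≤ Y⊗I_B}. -/
/-!
Upper bound: if `-tσ ≤ K ≤ tσ` and `-s ≤ L ≤ s`, then `-tsσ ⊗ I ≤ K ⊗ L ≤ tsσ ⊗ I`, because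
`A ⊗ B ∓ K ⊗ L` is half the sum of two Kronecker products of positive matrices. Lower bound:
compressing `-Y ⊗ I ≤ K ⊗ L ≤ Y ⊗ I` by `I ⊗ v`, for a unit eigenvector `v` of `L` whose
eigenvalue `λ` has maximal modulus, gives `-Y ≤ λ K ≤ Y`; hence `Y / |λ|` is feasible for
the trace norm of `K`, while `|λ|` is feasible for the spectral norm of `L`.
-/

open Matrix Kronecker
open scoped ComplexOrder

/-- The Hölder dual of the strategy 1-norm (dual diamond norm) of a Hermitian operator `H`
on `H_A ⊗ H_B`: `‖H‖*_{◇1} = inf{Tr Y : Y ≥ 0 on H_A, −Y⊗I ≤ H ≤ Y⊗I}`. -/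
noncomputable def dualDiamondNorm {a b : ℕ}
    (H : Matrix (Fin a × Fin b) (Fin a × Fin b) ℂ) : ℝ :=
  sInf {t : ℝ | ∃ Y : Matrix (Fin a) (Fin a) ℂ, Y.PosSemidef ∧
    ((Y ⊗ₖ (1 : Matrix (Fin b) (Fin b) ℂ)) - H).PosSemidef ∧
    (H + Y ⊗ₖ (1 : Matrix (Fin b) (Fin b) ℂ)).PosSemidef ∧
    t = Y.trace.re}

/-- The trace norm of a Hermitian `K`, via its variational characterization
`‖K‖₁ = inf{t ≥ 0 : ∃ σ ≥ 0, Tr σ = 1, −tσ ≤ K ≤ tσ}`. -/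
noncomputable def traceNormVar {a : ℕ} (K : Matrix (Fin a) (Fin a) ℂ) : ℝ :=
  sInf {t : ℝ | 0 ≤ t ∧ ∃ σ : Matrix (Fin a) (Fin a) ℂ, σ.PosSemidef ∧ σ.trace = 1 ∧
    ((t : ℂ) • σ - K).PosSemidef ∧ (K + (t : ℂ) • σ).PosSemidef}

/-- The spectral norm of a Hermitian `L`, via `‖L‖_∞ = inf{t ≥ 0 : −tI ≤ L ≤ tI}`. -/
noncomputable def specNormVar {b : ℕ} (L : Matrix (Fin b) (Fin b) ℂ) : ℝ :=
  sInf {t : ℝ | 0 ≤ t ∧ ((t : ℂ) • (1 : Matrix (Fin b) (Fin b) ℂ) - L).PosSemidef ∧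
    (L + (t : ℂ) • (1 : Matrix (Fin b) (Fin b) ℂ)).PosSemidef}

open scoped Pointwise

theorem Real.sInf_le_sInf_mul_sInf {D T S : Set ℝ} (hD : BddBelow D) (hT : T.Nonempty)
    (hS : S.Nonempty) (hT₀ : ∀ t ∈ T, 0 ≤ t) (hS₀ : ∀ s ∈ S, 0 ≤ s) (hTS : T * S ⊆ D) :
    sInf D ≤ sInf T * sInf S := by
  have h_le_mul (t : ℝ) (ht : t ∈ T) : sInf D ≤ t * sInf S := by
    rw [← smul_eq_mul, ← Real.sInf_smul_of_nonneg (hT₀ t ht)]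
    exact csInf_le_csInf hD hS.smul_set fun _ ⟨s, hs, hts⟩ => hts ▸ hTS (Set.mul_mem_mul ht hs)
  rw [mul_comm, ← smul_eq_mul, ← Real.sInf_smul_of_nonneg (Real.sInf_nonneg hS₀)]
  refine le_csInf hT.smul_set ?_
  rintro _ ⟨t, ht, rfl⟩
  simpa only [smul_eq_mul, mul_comm] using h_le_mul t ht

namespace Matrix

variable {n m : Type*} [Fintype n] [Fintype m]

theorem PosSemidef.trace_re_nonneg {A : Matrix n n ℂ} (hA : A.PosSemidef) : 0 ≤ A.trace.re :=
  (Complex.nonneg_iff.mp hA.trace_nonneg).1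

theorem PosSemidef.ofReal_trace_re {A : Matrix n n ℂ} (hA : A.PosSemidef) :
    (A.trace.re : ℂ) = A.trace :=
  (Complex.eq_re_of_ofReal_le hA.trace_nonneg).symm

theorem PosSemidef.exists_trace_eq_one_and_smul_eq [Nonempty n] [DecidableEq n]
    {A : Matrix n n ℂ} (hA : A.PosSemidef) :
    ∃ σ : Matrix n n ℂ, σ.PosSemidef ∧ σ.trace = 1 ∧ (A.trace.re : ℂ) • σ = A := by
  rw [hA.ofReal_trace_re]
  by_cases h : A.trace = 0
  · refine ⟨(Fintype.card n : ℂ)⁻¹ • 1, PosSemidef.one.smul (by positivity), ?_, ?_⟩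
    · simp [trace_smul]
    · simp [hA.trace_eq_zero_iff.mp h]
  · exact ⟨A.trace⁻¹ • A, hA.smul (by simpa using hA.trace_nonneg), by simp [trace_smul, h],
      by simp [smul_smul, h]⟩

section Pinching

variable {R : Type*} [CommSemiring R] [StarRing R] [DecidableEq n]

/-- The matrix of `x ↦ x ⊗ v`, an isometry when `v` is a unit vector. -/
def oneKroneckerVec (v : m → R) : Matrix (n × m) n R :=
  of fun p j => if p.1 = j then v p.2 else 0

theorem conjTranspose_oneKroneckerVec_mul_kronecker_mul (v : m → R) (M : Matrix n n R)
    (N : Matrix m m R) :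
    (oneKroneckerVec (n := n) v)ᴴ * (M ⊗ₖ N) * (oneKroneckerVec v : Matrix (n × m) n R) =
      (star v ⬝ᵥ N *ᵥ v) • M := by
  ext i j
  simp only [oneKroneckerVec, mul_apply, conjTranspose_apply, of_apply, kroneckerMap_apply,
    Fintype.sum_prod_type, apply_ite star, star_zero, ite_mul, zero_mul, mul_ite, mul_zero,
    Finset.sum_ite_irrel, Finset.sum_const_zero, Finset.sum_ite_eq', Finset.mem_univ, if_true,
    smul_apply, smul_eq_mul, dotProduct, mulVec, Pi.star_apply, Finset.sum_mul, Finset.mul_sum]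
  rw [Finset.sum_comm]
  exact Finset.sum_congr rfl fun _ _ => Finset.sum_congr rfl fun _ _ => by ring

end Pinching

theorem IsHermitian.posSemidef_add_eigenvalues_smul_of_kronecker [DecidableEq n] [DecidableEq m]
    {L : Matrix m m ℂ} (hL : L.IsHermitian) (i : m) {M N : Matrix n n ℂ}
    (h : (M ⊗ₖ 1 + N ⊗ₖ L).PosSemidef) : (M + (hL.eigenvalues i : ℂ) • N).PosSemidef := by
  set v : m → ℂ := ⇑(hL.eigenvectorBasis i)
  have hv : star v ⬝ᵥ v = 1 := by
    rw [dotProduct_comm, ← EuclideanSpace.inner_eq_star_dotProduct,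
      inner_self_eq_norm_sq_to_K, hL.eigenvectorBasis.orthonormal.1 i]
    simp
  have hLv : star v ⬝ᵥ L *ᵥ v = hL.eigenvalues i := by
    rw [hL.mulVec_eigenvectorBasis, dotProduct_smul, hv, Complex.real_smul, mul_one]
  simpa [Matrix.mul_add, Matrix.add_mul, conjTranspose_oneKroneckerVec_mul_kronecker_mul, hv, hLv]
    using h.conjTranspose_mul_mul_same (oneKroneckerVec v)

theorem IsHermitian.posSemidef_smul_one_sub_and_add_of_abs_eigenvalues_le [DecidableEq n]
    {A : Matrix n n ℂ} (hA : A.IsHermitian) {t : ℝ} (ht : ∀ i, |hA.eigenvalues i| ≤ t) :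
    ((t : ℂ) • 1 - A).PosSemidef ∧ (A + (t : ℂ) • 1).PosSemidef := by
  open scoped MatrixOrder in
  have hspec := hA.spectrum_real_eq_range_eigenvalues
  have h_le : A ≤ algebraMap ℝ _ t := le_algebraMap_of_spectrum_le (by
    rw [hspec]; rintro _ ⟨i, rfl⟩; exact (le_abs_self _).trans (ht i))
  have h_ge : algebraMap ℝ _ (-t) ≤ A := algebraMap_le_of_le_spectrum (by
    rw [hspec]; rintro _ ⟨i, rfl⟩; exact neg_le_of_abs_le (ht i))
  rw [Algebra.algebraMap_eq_smul_one, ← Complex.coe_smul] at h_le h_ge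
  exact ⟨h_le, by simpa [le_iff] using h_ge⟩

theorem PosSemidef.kronecker_sub_and_add {A K : Matrix n n ℂ} {B L : Matrix m m ℂ}
    (hAK : (A - K).PosSemidef) (hKA : (K + A).PosSemidef) (hBL : (B - L).PosSemidef)
    (hLB : (L + B).PosSemidef) :
    (A ⊗ₖ B - K ⊗ₖ L).PosSemidef ∧ (K ⊗ₖ L + A ⊗ₖ B).PosSemidef := by
  have half : (0 : ℂ) ≤ 2⁻¹ := by positivity
  constructor
  · rw [show A ⊗ₖ B - K ⊗ₖ L = (2⁻¹ : ℂ) • ((A - K) ⊗ₖ (L + B) + (K + A) ⊗ₖ (B - L)) by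
      ext; simp only [sub_apply, add_apply, smul_apply, kroneckerMap_apply, smul_eq_mul]; ring]
    exact ((hAK.kronecker hLB).add (hKA.kronecker hBL)).smul half
  · rw [show K ⊗ₖ L + A ⊗ₖ B = (2⁻¹ : ℂ) • ((A - K) ⊗ₖ (B - L) + (K + A) ⊗ₖ (L + B)) by
      ext; simp only [sub_apply, add_apply, smul_apply, kroneckerMap_apply, smul_eq_mul]; ring]
    exact ((hAK.kronecker hBL).add (hKA.kronecker hLB)).smul half

end Matrix

section Norms

variable {a b : ℕ}

def dualDiamondSet (H : Matrix (Fin a × Fin b) (Fin a × Fin b) ℂ) : Set ℝ :=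
  {t : ℝ | ∃ Y : Matrix (Fin a) (Fin a) ℂ, Y.PosSemidef ∧
    ((Y ⊗ₖ (1 : Matrix (Fin b) (Fin b) ℂ)) - H).PosSemidef ∧
    (H + Y ⊗ₖ (1 : Matrix (Fin b) (Fin b) ℂ)).PosSemidef ∧
    t = Y.trace.re}

def traceNormSet (K : Matrix (Fin a) (Fin a) ℂ) : Set ℝ :=
  {t : ℝ | 0 ≤ t ∧ ∃ σ : Matrix (Fin a) (Fin a) ℂ, σ.PosSemidef ∧ σ.trace = 1 ∧
    ((t : ℂ) • σ - K).PosSemidef ∧ (K + (t : ℂ) • σ).PosSemidef}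

def specNormSet (L : Matrix (Fin b) (Fin b) ℂ) : Set ℝ :=
  {t : ℝ | 0 ≤ t ∧ ((t : ℂ) • (1 : Matrix (Fin b) (Fin b) ℂ) - L).PosSemidef ∧
    (L + (t : ℂ) • (1 : Matrix (Fin b) (Fin b) ℂ)).PosSemidef}

theorem traceNormVar_eq_sInf (K : Matrix (Fin a) (Fin a) ℂ) :
    traceNormVar K = sInf (traceNormSet K) := rfl

theorem bddBelow_dualDiamondSet (H : Matrix (Fin a × Fin b) (Fin a × Fin b) ℂ) :
    BddBelow (dualDiamondSet H) :=
  ⟨0, by rintro _ ⟨Y, hY, -, -, rfl⟩; exact hY.trace_re_nonneg⟩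

theorem traceNormVar_nonneg (K : Matrix (Fin a) (Fin a) ℂ) : 0 ≤ traceNormVar K :=
  Real.sInf_nonneg fun _ ht => ht.1

theorem traceNormVar_of_isEmpty [IsEmpty (Fin a)] (K : Matrix (Fin a) (Fin a) ℂ) :
    traceNormVar K = 0 := by
  have hempty : traceNormSet K = ∅ := Set.eq_empty_of_forall_notMem <| by
    rintro t ⟨-, σ, -, hσ, -⟩
    simp [trace_eq_zero_of_isEmpty] at hσ
  rw [traceNormVar_eq_sInf, hempty, Real.sInf_empty]

theorem trace_re_mem_traceNormSet [Nonempty (Fin a)] {K Y : Matrix (Fin a) (Fin a) ℂ}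
    (hY : Y.PosSemidef) (hYK : (Y - K).PosSemidef) (hKY : (K + Y).PosSemidef) :
    Y.trace.re ∈ traceNormSet K := by
  obtain ⟨σ, hσ, hσ₁, hσY⟩ := hY.exists_trace_eq_one_and_smul_eq
  exact ⟨hY.trace_re_nonneg, σ, hσ, hσ₁, by rwa [hσY], by rwa [hσY]⟩

theorem traceNormVar_mul_le_trace_re {K Y : Matrix (Fin a) (Fin a) ℂ} {c : ℝ} (hc : 0 < c)
    (hY : Y.PosSemidef) (hYK : (Y - (c : ℂ) • K).PosSemidef)
    (hKY : (Y + (c : ℂ) • K).PosSemidef) :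
    traceNormVar K * c ≤ Y.trace.re := by
  rcases isEmpty_or_nonempty (Fin a) with ha | ha
  · simp [traceNormVar_of_isEmpty]
  have hc' : (0 : ℂ) ≤ (c⁻¹ : ℝ) := by exact_mod_cast (inv_pos.mpr hc).le
  have hscale (X Z : Matrix (Fin a) (Fin a) ℂ) :
      ((c⁻¹ : ℝ) : ℂ) • (X + (c : ℂ) • Z) = ((c⁻¹ : ℝ) : ℂ) • X + Z := by
    rw [smul_add, smul_smul, ← Complex.ofReal_mul, inv_mul_cancel₀ hc.ne', Complex.ofReal_one,
      one_smul]
  have hmem : (((c⁻¹ : ℝ) : ℂ) • Y).trace.re ∈ traceNormSet K := by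
    refine trace_re_mem_traceNormSet (hY.smul hc') ?_ ?_
    · have h := hYK.smul hc'
      rwa [sub_eq_add_neg, ← smul_neg, hscale, ← sub_eq_add_neg] at h
    · have h := hKY.smul hc'
      rwa [hscale, add_comm] at h
  have hle := csInf_le ⟨0, fun _ ht => ht.1⟩ hmem
  rw [← traceNormVar_eq_sInf, trace_smul, smul_eq_mul, Complex.re_ofReal_mul] at hle
  calc traceNormVar K * c ≤ c⁻¹ * Y.trace.re * c := by gcongr
    _ = Y.trace.re := by field_simp

theorem iSup_abs_eigenvalues_mem_specNormSet {L : Matrix (Fin b) (Fin b) ℂ}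
    (hL : L.IsHermitian) : (⨆ i, |hL.eigenvalues i|) ∈ specNormSet L :=
  ⟨Real.iSup_nonneg fun _ => abs_nonneg _,
    hL.posSemidef_smul_one_sub_and_add_of_abs_eigenvalues_le
      fun i => le_ciSup (Set.finite_range fun i => |hL.eigenvalues i|).bddAbove i⟩

theorem trace_re_mul_mem_dualDiamondSet {K A : Matrix (Fin a) (Fin a) ℂ}
    {L : Matrix (Fin b) (Fin b) ℂ} {s : ℝ} (hA : A.PosSemidef) (hAK : (A - K).PosSemidef)
    (hKA : (K + A).PosSemidef) (hs : s ∈ specNormSet L) :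
    A.trace.re * s ∈ dualDiamondSet (K ⊗ₖ L) := by
  obtain ⟨hs₀, hsL, hLs⟩ := hs
  have hAs : (A ⊗ₖ ((s : ℂ) • 1 : Matrix (Fin b) (Fin b) ℂ)) = ((s : ℂ) • A) ⊗ₖ 1 := by
    rw [kronecker_smul, smul_kronecker]
  obtain ⟨h₁, h₂⟩ := PosSemidef.kronecker_sub_and_add hAK hKA hsL hLs
  rw [hAs] at h₁ h₂
  exact ⟨(s : ℂ) • A, hA.smul (by exact_mod_cast hs₀), h₁, h₂, by simp [trace_smul, mul_comm]⟩

theorem nonempty_dualDiamondSet_kronecker {K : Matrix (Fin a) (Fin a) ℂ}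
    {L : Matrix (Fin b) (Fin b) ℂ} (hK : K.IsHermitian) (hL : L.IsHermitian) :
    (dualDiamondSet (K ⊗ₖ L)).Nonempty := by
  obtain ⟨hρ, hKρ, hρK⟩ := iSup_abs_eigenvalues_mem_specNormSet hK
  exact ⟨_, trace_re_mul_mem_dualDiamondSet (PosSemidef.one.smul (by exact_mod_cast hρ)) hKρ hρK
    (iSup_abs_eigenvalues_mem_specNormSet hL)⟩

theorem dualDiamondNorm_kronecker_le {K : Matrix (Fin a) (Fin a) ℂ}
    {L : Matrix (Fin b) (Fin b) ℂ} (hK : K.IsHermitian) (hL : L.IsHermitian) :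
    dualDiamondNorm (K ⊗ₖ L) ≤ traceNormVar K * specNormVar L := by
  rcases isEmpty_or_nonempty (Fin a) with ha | ha
  · have hpsd (M : Matrix (Fin a × Fin b) (Fin a × Fin b) ℂ) : M.PosSemidef :=
      Subsingleton.elim 0 M ▸ .zero
    rw [traceNormVar_of_isEmpty, zero_mul]
    exact csInf_le (bddBelow_dualDiamondSet _) ⟨0, .zero, hpsd _, hpsd _, by simp⟩
  obtain ⟨hρ, hKρ, hρK⟩ := iSup_abs_eigenvalues_mem_specNormSet hK
  refine Real.sInf_le_sInf_mul_sInf (bddBelow_dualDiamondSet _)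
    ⟨_, trace_re_mem_traceNormSet (PosSemidef.one.smul (by exact_mod_cast hρ)) hKρ hρK⟩
    ⟨_, iSup_abs_eigenvalues_mem_specNormSet hL⟩ (fun _ ht => ht.1) (fun _ hs => hs.1) ?_
  rintro _ ⟨t, ⟨ht, σ, hσ, hσ₁, hσK, hKσ⟩, s, hs, rfl⟩
  have h := trace_re_mul_mem_dualDiamondSet (hσ.smul (by exact_mod_cast ht)) hσK hKσ hs
  rwa [trace_smul, hσ₁, smul_eq_mul, mul_one, Complex.ofReal_re] at h

theorem traceNormVar_mul_specNormVar_le_trace_re {K Y : Matrix (Fin a) (Fin a) ℂ}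
    {L : Matrix (Fin b) (Fin b) ℂ} (hL : L.IsHermitian) (hY : Y.PosSemidef)
    (hYKL : (Y ⊗ₖ 1 - K ⊗ₖ L).PosSemidef) (hKLY : (K ⊗ₖ L + Y ⊗ₖ 1).PosSemidef) :
    traceNormVar K * specNormVar L ≤ Y.trace.re := by
  set ρ := ⨆ i, |hL.eigenvalues i|
  have hLρ : specNormVar L ≤ ρ :=
    csInf_le ⟨0, fun _ hs => hs.1⟩ (iSup_abs_eigenvalues_mem_specNormSet hL)
  rcases (Real.iSup_nonneg fun i => abs_nonneg (hL.eigenvalues i)).eq_or_lt with hρ | hρ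
  · calc traceNormVar K * specNormVar L ≤ 0 :=
          mul_nonpos_of_nonneg_of_nonpos (traceNormVar_nonneg K) (hρ ▸ hLρ)
      _ ≤ Y.trace.re := hY.trace_re_nonneg
  have : Nonempty (Fin b) := by
    by_contra h
    simp [not_nonempty_iff.mp h] at hρ
  obtain ⟨i, hi⟩ := exists_eq_ciSup_of_finite (f := fun i => |hL.eigenvalues i|)
  have hplus := hL.posSemidef_add_eigenvalues_smul_of_kronecker i (add_comm (K ⊗ₖ L) _ ▸ hKLY)
  have hminus := hL.posSemidef_add_eigenvalues_smul_of_kronecker i (M := Y) (N := -K) (by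
    convert hYKL using 1; ext; simp [sub_eq_add_neg])
  have hYρK : (Y - (ρ : ℂ) • K).PosSemidef ∧ (Y + (ρ : ℂ) • K).PosSemidef := by
    obtain h | h : hL.eigenvalues i = ρ ∨ hL.eigenvalues i = -ρ := by
      rcases abs_choice (hL.eigenvalues i) with h | h <;> [left; right] <;> linarith
    · rw [h] at hplus hminus
      exact ⟨by simpa [sub_eq_add_neg] using hminus, hplus⟩
    · rw [h] at hplus hminus
      exact ⟨by simpa [sub_eq_add_neg] using hplus, by simpa using hminus⟩
  calc traceNormVar K * specNormVar L ≤ traceNormVar K * ρ := by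
        gcongr; exact traceNormVar_nonneg K
    _ ≤ Y.trace.re := traceNormVar_mul_le_trace_re hρ hY hYρK.1 hYρK.2

end Norms

/-- Lemma B.1: the dual diamond norm is multiplicative on tensor products of Hermitian
operators: `‖K ⊗ L‖*_{◇1} = ‖K‖₁ · ‖L‖_∞`. -/
theorem dualDiamondNorm_kronecker (a b : ℕ)
    (K : Matrix (Fin a) (Fin a) ℂ) (L : Matrix (Fin b) (Fin b) ℂ)
    (hK : K.IsHermitian) (hL : L.IsHermitian) :
    dualDiamondNorm (K ⊗ₖ L) = traceNormVar K * specNormVar L := by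
  refine le_antisymm (dualDiamondNorm_kronecker_le hK hL)
    (le_csInf (nonempty_dualDiamondSet_kronecker hK hL) ?_)
  rintro _ ⟨Y, hY, hYKL, hKLY, rfl⟩
  exact traceNormVar_mul_specNormVar_le_trace_re hL hY hYKL hKLY
end
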